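/- arXiv:1710.06456 — 5 statements merged into one kernel-verified Lean document; each statement's English description precedes it below -/
import Mathlib

section
/- Let G be a simple graph on vertex set {1,…,n}. Then α(S_G) = α(G), β(S_G) = β(G), and γ(S_G) = γ(G), where on the left the parameters are the operator-system parameters of S_G ⊆ M_n and on the right are the corresponding graph parameters of G. -/
open Matrix
open scoped ComplexOrder

/-- A tuple of Kraus operators for a quantum channel `M_ι → M_k`:
`r` matrices of size `k × ι` with `∑ Aᵢᴴ Aᵢ = I`. -/
noncomputable def IsKraus {ι : Type*} [Fintype ι] [DecidableEq ι] {k r : ℕ}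
    (A : Fin r → Matrix (Fin k) ι ℂ) : Prop :=
  ∑ i, (A i)ᴴ * A i = 1

/-- The non-commutative confusability graph `S_Φ = span{Aᵢᴴ Aⱼ}` of a channel
given by Kraus operators. -/
noncomputable def confGraph {ι : Type*} [Fintype ι] {k r : ℕ}
    (A : Fin r → Matrix (Fin k) ι ℂ) : Submodule ℂ (Matrix ι ι ℂ) :=
  Submodule.span ℂ {B | ∃ i j, B = (A i)ᴴ * A j}

/-- Quantum complexity `γ(S)`: the least `k` such that `S = S_Φ` for some
quantum channel `Φ : M_ι → M_k`. -/
noncomputable def gammaOS {ι : Type*} [Fintype ι] [DecidableEq ι]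
    (S : Submodule ℂ (Matrix ι ι ℂ)) : ℕ :=
  sInf {k | ∃ r : ℕ, ∃ A : Fin r → Matrix (Fin k) ι ℂ, IsKraus A ∧ confGraph A = S}

/-- Quantum subcomplexity `β(S)`: the least `k` such that `S_Φ ⊆ S` for some
quantum channel `Φ : M_ι → M_k`. -/
noncomputable def betaOS {ι : Type*} [Fintype ι] [DecidableEq ι]
    (S : Submodule ℂ (Matrix ι ι ℂ)) : ℕ :=
  sInf {k | ∃ r : ℕ, ∃ A : Fin r → Matrix (Fin k) ι ℂ, IsKraus A ∧ confGraph A ≤ S}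

/-- Independence number `α(S)`: the largest `m` admitting an `S`-independent family
of `m` nonzero vectors, i.e. with `tr(Bᴴ xₚ xₖᴴ) = 0` for `B ∈ S`, `p ≠ q`. -/
noncomputable def alphaOS {ι : Type*} [Fintype ι] [DecidableEq ι]
    (S : Submodule ℂ (Matrix ι ι ℂ)) : ℕ :=
  sSup {m | ∃ x : Fin m → ι → ℂ, (∀ p, x p ≠ 0) ∧
    ∀ p q, p ≠ q → ∀ B ∈ S, Matrix.trace (Bᴴ * Matrix.vecMulVec (x p) (star (x q))) = 0}

/-- The graph operator system `S_G`, spanned by the matrix units `E_{ij}` with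
`i = j` or `ij` an edge of `G`. -/
noncomputable def graphOS {n : ℕ} (G : SimpleGraph (Fin n)) :
    Submodule ℂ (Matrix (Fin n) (Fin n) ℂ) :=
  Submodule.span ℂ {E | ∃ i j, (i = j ∨ G.Adj i j) ∧ E = Matrix.single i j 1}

/-- Graph parameter `γ(G)`: the least `k` for which `G` is the non-orthogonality graph
of a tuple of nonzero vectors in `ℂ^k`. -/
noncomputable def gammaG {n : ℕ} (G : SimpleGraph (Fin n)) : ℕ :=
  sInf {k | ∃ x : Fin n → Fin k → ℂ, (∀ i, x i ≠ 0) ∧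
    ∀ i j, i ≠ j → (G.Adj i j ↔ ∑ r, star (x i r) * x j r ≠ 0)}

/-- Graph parameter `β(G)`: the least `k` for which the non-orthogonality graph of
some tuple of nonzero vectors in `ℂ^k` is a subgraph of `G`. -/
noncomputable def betaG {n : ℕ} (G : SimpleGraph (Fin n)) : ℕ :=
  sInf {k | ∃ x : Fin n → Fin k → ℂ, (∀ i, x i ≠ 0) ∧
    ∀ i j, i ≠ j → (∑ r, star (x i r) * x j r ≠ 0) → G.Adj i j}

/-- The independence number `α(G)` of a graph. -/
noncomputable def alphaG {n : ℕ} (G : SimpleGraph (Fin n)) : ℕ :=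
  sSup {m | ∃ s : Finset (Fin n), s.card = m ∧ ∀ i ∈ s, ∀ j ∈ s, i ≠ j → ¬ G.Adj i j}

/-!
`S_G` consists of the matrices vanishing off the edges and the diagonal of `G`.

Since `tr(Bᴴ x yᴴ) = conj(x* B y)`, two vectors are `S_G`-orthogonal iff no point of the support of
`x` equals or is adjacent to a point of the support of `y`. Choosing one support point per vector
turns an `S_G`-independent family into an independent set of `G`; standard basis vectors give the
converse.

Nonzero vectors `x_p ∈ ℂ^k` give the Kraus operators `x_p e_pᴴ / ‖x_p‖`, whose confusability
graph is `S_{G(x)}`. Conversely, for Kraus operators `A_i` and `c ∈ ℂ^r` the columns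
`x_p = (∑ c_i A_i) e_p` satisfy `⟨x_p, x_q⟩ = c* M_{pq} c` with `(M_{pq})_{ij} = (A_iᴴ A_j)_{pq}`.
For generic `c` this vanishes exactly when `M_{pq} = 0`, i.e. when every element of `S_Φ` has zero
`(p, q)` entry. Genericity holds because a nonzero complex matrix has a nonzero quadratic form and,
along a real line `c + t d`, finitely many quadratic forms are polynomials in `t` with a common
non-root.
-/

section QuadraticForm

open Polynomial

variable {m : Type*} [Fintype m]

theorem Matrix.exists_star_dotProduct_mulVec_ne_zero [DecidableEq m] {M : Matrix m m ℂ}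
    (hM : M ≠ 0) : ∃ c : m → ℂ, star c ⬝ᵥ M *ᵥ c ≠ 0 := by
  by_contra! h
  refine hM (Matrix.toLpLin 2 2 |>.map_eq_zero_iff.mp ?_)
  refine (inner_map_self_eq_zero _).mp fun x => inner_eq_zero_symm.mpr ?_
  rw [EuclideanSpace.inner_eq_star_dotProduct, Matrix.ofLp_toLpLin, Matrix.toLin'_apply,
    dotProduct_comm, h]

theorem Polynomial.exists_real_forall_eval_ne_zero {ι : Type*} (s : Finset ι) (P : ι → ℂ[X])
    (hP : ∀ i ∈ s, P i ≠ 0) : ∃ t : ℝ, ∀ i ∈ s, (P i).eval (t : ℂ) ≠ 0 := by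
  by_contra! h
  have hroots : Set.range ((↑) : ℝ → ℂ) ⊆ {z | (∏ i ∈ s, P i).IsRoot z} := by
    rintro _ ⟨t, rfl⟩
    obtain ⟨i, hi, hPi⟩ := h t
    simpa [eval_prod, Finset.prod_eq_zero_iff] using ⟨i, hi, hPi⟩
  exact Finset.prod_ne_zero_iff.mpr hP <| eq_zero_of_infinite_isRoot _ <|
    (Set.infinite_range_of_injective Complex.ofReal_injective).mono hroots

theorem Matrix.star_dotProduct_mulVec_add_ofReal_smul (M : Matrix m m ℂ) (c d : m → ℂ) (t : ℝ) :
    star (c + (t : ℂ) • d) ⬝ᵥ M *ᵥ (c + (t : ℂ) • d) =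
      (C (star c ⬝ᵥ M *ᵥ c) + C (star c ⬝ᵥ M *ᵥ d + star d ⬝ᵥ M *ᵥ c) * X +
        C (star d ⬝ᵥ M *ᵥ d) * X ^ 2).eval (t : ℂ) := by
  simp only [star_add, star_smul, Complex.star_def, Complex.conj_ofReal, mulVec_add, mulVec_smul,
    add_dotProduct, dotProduct_add, smul_dotProduct, dotProduct_smul, smul_eq_mul, eval_add,
    eval_mul, eval_C, eval_X, eval_pow]
  ring

theorem Matrix.exists_forall_star_dotProduct_mulVec_ne_zero [DecidableEq m] {ι : Type*}
    (s : Finset ι) (M : ι → Matrix m m ℂ) (hM : ∀ i ∈ s, M i ≠ 0) :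
    ∃ c : m → ℂ, ∀ i ∈ s, star c ⬝ᵥ M i *ᵥ c ≠ 0 := by
  classical
  induction s using Finset.induction_on with
  | empty => exact ⟨0, by simp⟩
  | insert a s ha ih =>
    obtain ⟨c, hc⟩ := ih fun i hi => hM i (Finset.mem_insert_of_mem hi)
    obtain ⟨d, hd⟩ := exists_star_dotProduct_mulVec_ne_zero (hM a (Finset.mem_insert_self a s))
    -- constant term nonzero on `s`, leading coefficient nonzero at `a`
    obtain ⟨t, ht⟩ := Polynomial.exists_real_forall_eval_ne_zero (insert a s)
      (fun i => C (star c ⬝ᵥ M i *ᵥ c) + C (star c ⬝ᵥ M i *ᵥ d + star d ⬝ᵥ M i *ᵥ c) * X +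
        C (star d ⬝ᵥ M i *ᵥ d) * X ^ 2) (by
      intro i hi hP
      rcases Finset.mem_insert.mp hi with rfl | hi
      · exact hd (by simpa using congrArg (coeff · 2) hP)
      · exact hc i hi (by simpa using congrArg (eval 0) hP))
    exact ⟨c + (t : ℂ) • d, fun i hi => by
      rw [star_dotProduct_mulVec_add_ofReal_smul]; exact ht i hi⟩

end QuadraticForm

theorem Matrix.trace_conjTranspose_mul_vecMulVec {m : Type*} [Fintype m] (B : Matrix m m ℂ)
    (u v : m → ℂ) : trace (Bᴴ * vecMulVec u (star v)) = star (star u ⬝ᵥ B *ᵥ v) := by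
  rw [mul_vecMulVec, trace_vecMulVec, ← star_star (Bᴴ *ᵥ u), star_mulVec,
    conjTranspose_conjTranspose, star_dotProduct, star_star, dotProduct_comm, dotProduct_mulVec]

theorem Matrix.exists_smul_star_dotProduct_self_eq_one {κ : Type*} [Fintype κ] {v : κ → ℂ}
    (hv : v ≠ 0) : ∃ c : ℂ, c ≠ 0 ∧ star (c • v) ⬝ᵥ (c • v) = 1 := by
  set r : ℂ := ↑‖WithLp.toLp 2 v‖
  have hr : r ≠ 0 := by simpa [r] using hv
  have hnorm : star v ⬝ᵥ v = r ^ 2 := by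
    have := inner_self_eq_norm_sq_to_K (𝕜 := ℂ) (WithLp.toLp 2 v)
    rwa [EuclideanSpace.inner_eq_star_dotProduct, dotProduct_comm] at this
  refine ⟨r⁻¹, inv_ne_zero hr, ?_⟩
  rw [star_smul, smul_dotProduct, dotProduct_smul, hnorm, smul_eq_mul, smul_eq_mul, star_inv₀,
    show star r = r from Complex.conj_ofReal _]
  field_simp

def nonOrthGraph {ι κ : Type*} [Fintype κ] (x : ι → κ → ℂ) : SimpleGraph ι where
  Adj i j := i ≠ j ∧ star (x i) ⬝ᵥ x j ≠ 0
  symm.symm i j h := ⟨h.1.symm, by rw [star_dotProduct]; exact star_ne_zero.mpr h.2⟩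
  loopless.irrefl i h := h.1 rfl

theorem nonOrthGraph_smul {ι κ : Type*} [Fintype κ] (x : ι → κ → ℂ) {c : ι → ℂ}
    (hc : ∀ i, c i ≠ 0) : nonOrthGraph (fun i => c i • x i) = nonOrthGraph x := by
  ext i j
  simp [nonOrthGraph, hc]

section KrausToVectors

variable {ι : Type*} {k r : ℕ} (A : Fin r → Matrix (Fin k) ι ℂ)

theorem one_mem_confGraph [Fintype ι] [DecidableEq ι] (hA : IsKraus A) : 1 ∈ confGraph A :=
  hA ▸ Submodule.sum_mem _ fun i _ => Submodule.subset_span ⟨i, i, rfl⟩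

def krausEntryForm (p q : ι) : Matrix (Fin r) (Fin r) ℂ :=
  of fun i j => ((A i)ᴴ * A j) p q

theorem krausEntryForm_eq_zero_iff [Fintype ι] (p q : ι) :
    krausEntryForm A p q = 0 ↔ ∀ B ∈ confGraph A, B p q = 0 := by
  refine ⟨fun h B hB => ?_, fun h => ext fun i j => h _ (Submodule.subset_span ⟨i, j, rfl⟩)⟩
  induction hB using Submodule.span_induction with
  | mem B hB => obtain ⟨i, j, rfl⟩ := hB; exact congrFun₂ h i j
  | zero => rfl
  | add B C _ _ hB hC => simp [hB, hC]
  | smul c B _ hB => simp [hB]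

def krausColumn (c : Fin r → ℂ) (p : ι) : Fin k → ℂ :=
  fun s => ∑ i, c i * A i s p

theorem star_krausColumn_dotProduct_krausColumn (c : Fin r → ℂ) (p q : ι) :
    star (krausColumn A c p) ⬝ᵥ krausColumn A c q =
      star c ⬝ᵥ krausEntryForm A p q *ᵥ c := by
  simp only [krausColumn, krausEntryForm, dotProduct, mulVec, mul_apply, conjTranspose_apply,
    of_apply, Pi.star_apply, star_sum, star_mul', Finset.mul_sum, Finset.sum_mul]
  refine (Finset.sum_congr rfl fun s _ => Finset.sum_comm).trans ?_
  rw [Finset.sum_comm]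
  refine Finset.sum_congr rfl fun i _ => ?_
  rw [Finset.sum_comm]
  refine Finset.sum_congr rfl fun j _ => Finset.sum_congr rfl fun s _ => ?_
  ring

theorem exists_vectors_star_dotProduct_ne_zero_iff [Fintype ι] :
    ∃ x : ι → Fin k → ℂ, ∀ p q, star (x p) ⬝ᵥ x q ≠ 0 ↔ ∃ B ∈ confGraph A, B p q ≠ 0 := by
  classical
  obtain ⟨c, hc⟩ := exists_forall_star_dotProduct_mulVec_ne_zero
    (Finset.univ.filter fun pq : ι × ι => krausEntryForm A pq.1 pq.2 ≠ 0)
    (fun pq => krausEntryForm A pq.1 pq.2) (fun pq hpq => (Finset.mem_filter.mp hpq).2)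
  refine ⟨krausColumn A c, fun p q => ?_⟩
  rw [star_krausColumn_dotProduct_krausColumn]
  by_cases h : krausEntryForm A p q = 0
  · have hB := (krausEntryForm_eq_zero_iff A p q).mp h
    exact iff_of_false (by simp [h]) fun ⟨B, hB', hBpq⟩ => hBpq (hB B hB')
  · have hB := (krausEntryForm_eq_zero_iff A p q).not.mp h
    push Not at hB
    exact iff_of_true (hc (p, q) (by simpa using h)) hB

theorem exists_nonzero_vectors_of_isKraus [Fintype ι] [DecidableEq ι] (hA : IsKraus A) :
    ∃ x : ι → Fin k → ℂ, (∀ p, x p ≠ 0) ∧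
      ∀ p q, star (x p) ⬝ᵥ x q ≠ 0 ↔ ∃ B ∈ confGraph A, B p q ≠ 0 := by
  obtain ⟨x, hx⟩ := exists_vectors_star_dotProduct_ne_zero_iff A
  exact ⟨x, fun p hp => (hx p p).mpr ⟨1, one_mem_confGraph A hA, by simp⟩ (by simp [hp]), hx⟩

end KrausToVectors

section GraphOS

variable {n : ℕ} {G : SimpleGraph (Fin n)}

theorem single_one_mem_graphOS {i j : Fin n} (hij : i = j ∨ G.Adj i j) :
    single i j (1 : ℂ) ∈ graphOS G :=
  Submodule.subset_span ⟨i, j, hij, rfl⟩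

theorem mem_graphOS_iff {B : Matrix (Fin n) (Fin n) ℂ} :
    B ∈ graphOS G ↔ ∀ i j, i ≠ j → ¬ G.Adj i j → B i j = 0 := by
  constructor
  · intro hB i j hij hG
    induction hB using Submodule.span_induction with
    | mem B hB =>
      obtain ⟨a, b, hab, rfl⟩ := hB
      rw [single_apply_of_ne]
      rintro ⟨rfl, rfl⟩
      exact hab.elim hij hG
    | zero => rfl
    | add B C _ _ hB hC => simp [hB, hC]
    | smul c B _ hB => simp [hB]
  · intro hB
    rw [matrix_eq_sum_single B]
    refine Submodule.sum_mem _ fun i _ => Submodule.sum_mem _ fun j _ => ?_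
    by_cases hij : i = j ∨ G.Adj i j
    · simpa using Submodule.smul_mem _ (B i j) (single_one_mem_graphOS hij)
    · push Not at hij
      rw [hB i j hij.1 hij.2, single_zero]
      exact zero_mem _

theorem adj_iff_exists_mem_graphOS_apply_ne_zero {i j : Fin n} (hij : i ≠ j) :
    G.Adj i j ↔ ∃ B ∈ graphOS G, B i j ≠ 0 := by
  refine ⟨fun h => ⟨_, single_one_mem_graphOS (Or.inr h), by simp⟩, ?_⟩
  rintro ⟨B, hB, hBij⟩
  by_contra h
  exact hBij (mem_graphOS_iff.mp hB i j hij h)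

theorem graphOS_mono {H : SimpleGraph (Fin n)} (h : G ≤ H) : graphOS G ≤ graphOS H :=
  Submodule.span_mono fun _ ⟨i, j, hij, hE⟩ => ⟨i, j, hij.imp_right (@h i j), hE⟩

theorem forall_mem_graphOS_trace_eq_zero_iff (u v : Fin n → ℂ) :
    (∀ B ∈ graphOS G, trace (Bᴴ * vecMulVec u (star v)) = 0) ↔
      ∀ a b, u a ≠ 0 → v b ≠ 0 → a ≠ b ∧ ¬ G.Adj a b := by
  simp only [trace_conjTranspose_mul_vecMulVec, star_eq_zero]
  constructor
  · intro h a b ha hb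
    by_contra hab
    have := h _ (single_one_mem_graphOS (not_and_or.mp hab |>.imp not_not.mp not_not.mp))
    simp [single_mulVec_eq, ha, hb] at this
  · intro h B hB
    simp only [dotProduct, mulVec, Finset.mul_sum]
    refine Finset.sum_eq_zero fun a _ => Finset.sum_eq_zero fun b _ => ?_
    by_cases ha : u a = 0
    · simp [ha]
    by_cases hb : v b = 0
    · simp [hb]
    obtain ⟨hab, hG⟩ := h a b ha hb
    simp [mem_graphOS_iff.mp hB a b hab hG]

theorem exists_indepFinset_of_graphOS_independent {m : ℕ} {x : Fin m → Fin n → ℂ}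
    (hx : ∀ p, x p ≠ 0)
    (hind : ∀ p q, p ≠ q → ∀ B ∈ graphOS G, trace (Bᴴ * vecMulVec (x p) (star (x q))) = 0) :
    ∃ s : Finset (Fin n), s.card = m ∧ ∀ i ∈ s, ∀ j ∈ s, i ≠ j → ¬ G.Adj i j := by
  choose a ha using fun p => Function.ne_iff.mp (hx p)
  have hfar : ∀ p q, p ≠ q → a p ≠ a q ∧ ¬ G.Adj (a p) (a q) := fun p q hpq =>
    (forall_mem_graphOS_trace_eq_zero_iff _ _).mp (hind p q hpq) _ _ (ha p) (ha q)
  have ha_inj : Function.Injective a := fun p q h => by_contra fun hpq => (hfar p q hpq).1 h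
  refine ⟨Finset.univ.image a, by simp [Finset.card_image_of_injective _ ha_inj], ?_⟩
  simp only [Finset.mem_image, Finset.mem_univ, true_and]
  rintro _ ⟨p, rfl⟩ _ ⟨q, rfl⟩ hpq
  exact (hfar p q (ne_of_apply_ne a hpq)).2

theorem exists_graphOS_independent_of_indepFinset {s : Finset (Fin n)}
    (hs : ∀ i ∈ s, ∀ j ∈ s, i ≠ j → ¬ G.Adj i j) :
    ∃ x : Fin s.card → Fin n → ℂ, (∀ p, x p ≠ 0) ∧
      ∀ p q, p ≠ q → ∀ B ∈ graphOS G, trace (Bᴴ * vecMulVec (x p) (star (x q))) = 0 := by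
  set e : Fin s.card → Fin n := fun p => s.equivFin.symm p
  have he : Function.Injective e := Subtype.val_injective.comp s.equivFin.symm.injective
  refine ⟨fun p => Pi.single (e p) 1, fun p => by simp, fun p q hpq => ?_⟩
  rw [forall_mem_graphOS_trace_eq_zero_iff]
  intro a b ha hb
  obtain rfl : a = e p := by_contra fun h => ha (Pi.single_eq_of_ne h 1)
  obtain rfl : b = e q := by_contra fun h => hb (Pi.single_eq_of_ne h 1)
  exact ⟨he.ne hpq, hs _ (s.equivFin.symm p).2 _ (s.equivFin.symm q).2 (he.ne hpq)⟩

theorem alphaOS_graphOS : alphaOS (graphOS G) = alphaG G := by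
  rw [alphaOS, alphaG]
  congr 1
  ext m
  constructor
  · rintro ⟨x, hx, hind⟩
    exact exists_indepFinset_of_graphOS_independent hx hind
  · rintro ⟨s, rfl, hs⟩
    exact exists_graphOS_independent_of_indepFinset hs

def krausOfVectors {k : ℕ} (y : Fin n → Fin k → ℂ) : Fin n → Matrix (Fin k) (Fin n) ℂ :=
  fun p => vecMulVec (y p) (Pi.single p 1)

theorem conjTranspose_krausOfVectors_mul {k : ℕ} (y : Fin n → Fin k → ℂ) (p q : Fin n) :
    (krausOfVectors y p)ᴴ * krausOfVectors y q = (star (y p) ⬝ᵥ y q) • single p q 1 := by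
  rw [krausOfVectors, krausOfVectors, conjTranspose_vecMulVec, vecMulVec_mul_vecMulVec,
    single_eq_single_vecMulVec_single]
  simp

theorem isKraus_krausOfVectors {k : ℕ} {y : Fin n → Fin k → ℂ}
    (hy : ∀ p, star (y p) ⬝ᵥ y p = 1) : IsKraus (krausOfVectors y) := by
  simp only [IsKraus, conjTranspose_krausOfVectors_mul, hy, one_smul, sum_single_one]

theorem confGraph_krausOfVectors {k : ℕ} {y : Fin n → Fin k → ℂ} (hy : ∀ p, y p ≠ 0) :
    confGraph (krausOfVectors y) = graphOS (nonOrthGraph y) := by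
  apply le_antisymm
  · refine Submodule.span_le.mpr ?_
    rintro _ ⟨p, q, rfl⟩
    rw [conjTranspose_krausOfVectors_mul]
    by_cases h : star (y p) ⬝ᵥ y q = 0
    · simp [h]
    · refine Submodule.smul_mem _ _ (single_one_mem_graphOS ?_)
      exact (eq_or_ne p q).imp_right fun hpq => ⟨hpq, h⟩
  · refine Submodule.span_le.mpr ?_
    rintro _ ⟨p, q, hpq, rfl⟩
    have h : star (y p) ⬝ᵥ y q ≠ 0 := by
      rcases hpq with rfl | hpq
      · exact dotProduct_star_self_eq_zero.not.mpr (hy p)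
      · exact hpq.2
    have := Submodule.smul_mem (confGraph (krausOfVectors y)) (star (y p) ⬝ᵥ y q)⁻¹
      (Submodule.subset_span ⟨p, q, rfl⟩)
    rwa [conjTranspose_krausOfVectors_mul, smul_smul, inv_mul_cancel₀ h, one_smul] at this

theorem exists_isKraus_confGraph_eq {k : ℕ} {x : Fin n → Fin k → ℂ} (hx : ∀ p, x p ≠ 0) :
    ∃ A : Fin n → Matrix (Fin k) (Fin n) ℂ, IsKraus A ∧
      confGraph A = graphOS (nonOrthGraph x) := by
  choose c hc hunit using fun p => exists_smul_star_dotProduct_self_eq_one (hx p)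
  refine ⟨krausOfVectors fun p => c p • x p, isKraus_krausOfVectors hunit, ?_⟩
  rw [confGraph_krausOfVectors fun p => smul_ne_zero (hc p) (hx p), nonOrthGraph_smul x hc]

theorem betaOS_graphOS : betaOS (graphOS G) = betaG G := by
  rw [betaOS, betaG]
  congr 1
  ext k
  constructor
  · rintro ⟨r, A, hA, hAG⟩
    obtain ⟨x, hx, hxA⟩ := exists_nonzero_vectors_of_isKraus A hA
    refine ⟨x, hx, fun p q hpq h => ?_⟩
    obtain ⟨B, hB, hBpq⟩ := (hxA p q).mp h
    exact (adj_iff_exists_mem_graphOS_apply_ne_zero hpq).mpr ⟨B, hAG hB, hBpq⟩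
  · rintro ⟨x, hx, hxG⟩
    obtain ⟨A, hA, hAx⟩ := exists_isKraus_confGraph_eq hx
    exact ⟨n, A, hA, hAx ▸ graphOS_mono fun p q h => hxG p q h.1 h.2⟩

theorem gammaOS_graphOS : gammaOS (graphOS G) = gammaG G := by
  rw [gammaOS, gammaG]
  congr 1
  ext k
  constructor
  · rintro ⟨r, A, hA, hAG⟩
    obtain ⟨x, hx, hxA⟩ := exists_nonzero_vectors_of_isKraus A hA
    refine ⟨x, hx, fun p q hpq => ?_⟩
    rw [adj_iff_exists_mem_graphOS_apply_ne_zero hpq, ← hAG]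
    exact (hxA p q).symm
  · rintro ⟨x, hx, hxG⟩
    obtain ⟨A, hA, hAx⟩ := exists_isKraus_confGraph_eq hx
    have hGx : nonOrthGraph x = G := by
      ext p q
      exact ⟨fun h => (hxG p q h.1).mpr h.2, fun h => ⟨h.ne, (hxG p q h.ne).mp h⟩⟩
    exact ⟨n, A, hA, hAx.trans (congrArg graphOS hGx)⟩

end GraphOS

/-- for a graph `G` on `{1, …, n}`, the operator-system parameters of
`S_G` coincide with the graph parameters: `α(S_G) = α(G)`, `β(S_G) = β(G)`,
`γ(S_G) = γ(G)`. -/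
theorem graph_params (n : ℕ) (G : SimpleGraph (Fin n)) :
    alphaOS (graphOS G) = alphaG G ∧ betaOS (graphOS G) = betaG G ∧
    gammaOS (graphOS G) = gammaG G :=
  ⟨alphaOS_graphOS, betaOS_graphOS, gammaOS_graphOS⟩
end

section
/- Let G be a simple graph on vertex set {1,…,n}. Then cc(S_G) = cc(G); in particular, the infimum defining cc(S_G) is finite and attained. -/
open Matrix
open scoped ComplexOrder

/-- A non-cancelling tuple of Kraus operators: each of them of the form `A · D` with
`A` entrywise nonnegative (real entries) and `D` an invertible diagonal matrix. -/
noncomputable def IsNonCancelling {ι : Type*} [Fintype ι] [DecidableEq ι] {k r : ℕ}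
    (A : Fin r → Matrix (Fin k) ι ℂ) : Prop :=
  ∀ i, ∃ (B : Matrix (Fin k) ι ℝ) (d : ι → ℂ),
    (∀ a b, 0 ≤ B a b) ∧ (∀ j, d j ≠ 0) ∧
    A i = (B.map ((↑) : ℝ → ℂ)) * Matrix.diagonal d

/-- `cc(S) ∈ ℕ ∪ {∞}`: the infimum of the `k` for which some non-cancelling quantum channel
`Φ : M_ι → M_k` has `S_Φ = S`. -/
noncomputable def ccOS {ι : Type*} [Fintype ι] [DecidableEq ι]
    (S : Submodule ℂ (Matrix ι ι ℂ)) : ℕ∞ :=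
  sInf {c : ℕ∞ | ∃ k : ℕ, c = k ∧ ∃ r : ℕ, ∃ A : Fin r → Matrix (Fin k) ι ℂ,
    IsKraus A ∧ IsNonCancelling A ∧ confGraph A = S}

/-- Graph parameter `cc(G)`: the least `k` for which `G` is the non-orthogonality graph
of a tuple of nonzero entrywise-nonnegative vectors in `ℝ^k`. -/
noncomputable def ccG {n : ℕ} (G : SimpleGraph (Fin n)) : ℕ :=
  sInf {k | ∃ x : Fin n → Fin k → ℝ, (∀ i, x i ≠ 0) ∧ (∀ i r, 0 ≤ x i r) ∧
    ∀ i j, i ≠ j → (G.Adj i j ↔ ∑ r, x i r * x j r ≠ 0)}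

/-! Nonnegative vectors have a nonzero dot product iff their supports meet, so nothing cancels.
If `Aᵢ = Bᵢ Dᵢ` are non-cancelling Kraus operators, the `(j, j')` entry of `Aᵢᴴ Aᵢ'` is a nonzero
multiple of `⟨Bᵢ eⱼ, Bᵢ' eⱼ'⟩ ≥ 0`; hence the column sums `xⱼ = ∑ᵢ Bᵢ eⱼ ∈ ℝ^k` satisfy
`⟨xⱼ, xⱼ'⟩ ≠ 0` iff some element of `span{Aᵢᴴ Aᵢ'}` is nonzero at `(j, j')`, which for `S_G` means
`j = j'` or `jj' ∈ E(G)`. Conversely, unit nonnegative vectors `yᵢ` with non-orthogonality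
graph `G` give the non-cancelling Kraus operators `Aᵢ = yᵢ eᵢᵀ`, with `Aᵢᴴ Aⱼ = ⟨yᵢ, yⱼ⟩ E_{ij}`
spanning `S_G`. So both infima range over the same nonempty set of dimensions `k`. -/
section NonnegRep

variable {ι κ : Type*} [Fintype κ]

def IsNonnegRep (G : SimpleGraph ι) (x : ι → κ → ℝ) : Prop :=
  (∀ i, x i ≠ 0) ∧ (∀ i r, 0 ≤ x i r) ∧ ∀ i j, i ≠ j → (G.Adj i j ↔ x i ⬝ᵥ x j ≠ 0)

lemma Fintype.sum_ne_zero_iff_of_nonneg {α : Type*} [Fintype α] {f : α → ℝ} (hf : 0 ≤ f) :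
    ∑ a, f a ≠ 0 ↔ ∃ a, f a ≠ 0 := by
  rw [Ne, Fintype.sum_eq_zero_iff_of_nonneg hf, funext_iff, not_forall]
  rfl

lemma dotProduct_ne_zero_iff_of_nonneg {v w : κ → ℝ} (hv : 0 ≤ v) (hw : 0 ≤ w) :
    v ⬝ᵥ w ≠ 0 ↔ ∃ r, v r ≠ 0 ∧ w r ≠ 0 := by
  simp only [dotProduct, Fintype.sum_ne_zero_iff_of_nonneg fun r => mul_nonneg (hv r) (hw r),
    ne_eq, mul_eq_zero, not_or]

lemma isNonnegRep_iff {G : SimpleGraph ι} {x : ι → κ → ℝ} :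
    IsNonnegRep G x ↔ (∀ i r, 0 ≤ x i r) ∧ ∀ i j, x i ⬝ᵥ x j ≠ 0 ↔ i = j ∨ G.Adj i j := by
  constructor
  · rintro ⟨hx0, hnn, hadj⟩
    refine ⟨hnn, fun i j => ?_⟩
    rcases eq_or_ne i j with rfl | hij
    · simpa [dotProduct_self_eq_zero] using hx0 i
    · simp [hij, hadj i j hij]
  · rintro ⟨hnn, hdot⟩
    exact ⟨fun i => by simpa [dotProduct_self_eq_zero] using (hdot i i).mpr (Or.inl rfl), hnn,
      fun i j hij => by simp [hdot, hij]⟩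

lemma IsNonnegRep.comp_equiv {κ' : Type*} [Fintype κ'] {G : SimpleGraph ι} {x : ι → κ → ℝ}
    (hx : IsNonnegRep G x) (e : κ' ≃ κ) : IsNonnegRep G fun i => x i ∘ e := by
  rw [isNonnegRep_iff] at hx ⊢
  exact ⟨fun i r => hx.1 i (e r), by simpa using hx.2⟩

lemma IsNonnegRep.exists_normalized {G : SimpleGraph ι} {x : ι → κ → ℝ} (hx : IsNonnegRep G x) :
    ∃ y : ι → κ → ℝ, IsNonnegRep G y ∧ ∀ i, y i ⬝ᵥ y i = 1 := by
  obtain ⟨hnn, hdot⟩ := isNonnegRep_iff.mp hx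
  have hpos : ∀ i, 0 < x i ⬝ᵥ x i := fun i =>
    (dotProduct_nonneg_of_nonneg (hnn i) (hnn i)).lt_of_ne' ((hdot i i).mpr (Or.inl rfl))
  set c : ι → ℝ := fun i => (√(x i ⬝ᵥ x i))⁻¹
  have hc : ∀ i, 0 < c i := fun i => inv_pos.mpr (Real.sqrt_pos.mpr (hpos i))
  have hcdot : ∀ i j, (c i • x i) ⬝ᵥ (c j • x j) = c i * c j * (x i ⬝ᵥ x j) := fun i j => by
    simp only [smul_dotProduct, dotProduct_smul, smul_eq_mul]; ring
  refine ⟨fun i => c i • x i,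
    isNonnegRep_iff.mpr ⟨fun i r => mul_nonneg (hc i).le (hnn i r), fun i j => ?_⟩, fun i => ?_⟩
  · rw [hcdot, ← hdot i j]
    exact mul_ne_zero_iff_left (mul_ne_zero (hc i).ne' (hc j).ne')
  · rw [hcdot, ← sq, inv_pow, Real.sq_sqrt (hpos i).le, inv_mul_cancel₀ (hpos i).ne']

lemma exists_isNonnegRep [Fintype ι] (G : SimpleGraph ι) :
    ∃ x : ι → ι × ι → ℝ, IsNonnegRep G x := by
  classical
  -- `x i` is the indicator of the vertex `(i, i)` and of the edges at `i`, as ordered pairs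
  refine ⟨fun i p => if (p.1 = i ∨ p.2 = i) ∧ (p.1 = p.2 ∨ G.Adj p.1 p.2) then 1 else 0,
    isNonnegRep_iff.mpr ⟨fun i p => by split_ifs <;> norm_num, fun i j => ?_⟩⟩
  rw [dotProduct_ne_zero_iff_of_nonneg (fun p => by dsimp only; split_ifs <;> norm_num)
    (fun p => by dsimp only; split_ifs <;> norm_num)]
  constructor
  · rintro ⟨⟨a, b⟩, hi, hj⟩
    simp only [ne_eq, ite_eq_right_iff, one_ne_zero, imp_false, not_not] at hi hj
    obtain ⟨hai | hbi, rfl | hab⟩ := hi <;> obtain ⟨haj | hbj, -⟩ := hj <;> subst_vars <;>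
      simp_all [G.adj_symm]
  · intro hij
    refine ⟨(i, j), ?_⟩
    rcases hij with rfl | hij <;> simp [*]

end NonnegRep

section Span

variable {R α m : Type*} [Semiring R] [AddCommMonoid α] [Module R α]

lemma Matrix.exists_mem_span_apply_ne_zero_iff {S : Set (Matrix m m α)} {i j : m} :
    (∃ M ∈ Submodule.span R S, M i j ≠ 0) ↔ ∃ M ∈ S, M i j ≠ 0 := by
  refine ⟨?_, fun ⟨M, hM, hMij⟩ => ⟨M, Submodule.subset_span hM, hMij⟩⟩
  contrapose!
  intro h M hM
  exact (Submodule.span_le (p := LinearMap.ker (entryLinearMap R α i j)) |>.mpr h) hM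

end Span

section GraphOS

variable {n : ℕ} (G : SimpleGraph (Fin n))

lemma single_mem_graphOS {i j : Fin n} (hij : i = j ∨ G.Adj i j) (c : ℂ) :
    single i j c ∈ graphOS G := by
  simpa [smul_single] using (graphOS G).smul_mem c (Submodule.subset_span ⟨i, j, hij, rfl⟩)

lemma exists_mem_graphOS_apply_ne_zero_iff {i j : Fin n} :
    (∃ M ∈ graphOS G, M i j ≠ 0) ↔ i = j ∨ G.Adj i j := by
  rw [graphOS, exists_mem_span_apply_ne_zero_iff]
  constructor
  · rintro ⟨_, ⟨a, b, hab, rfl⟩, hM⟩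
    obtain ⟨rfl, rfl⟩ : a = i ∧ b = j := by simpa [single_apply] using hM
    exact hab
  · exact fun hij => ⟨_, ⟨i, j, hij, rfl⟩, by simp⟩

lemma span_single_eq_graphOS {c : Fin n → Fin n → ℂ} (hc : ∀ i j, c i j ≠ 0 ↔ i = j ∨ G.Adj i j) :
    Submodule.span ℂ {B | ∃ i j, B = single i j (c i j)} = graphOS G := by
  refine le_antisymm (Submodule.span_le.mpr ?_) (Submodule.span_le.mpr ?_)
  · rintro _ ⟨i, j, rfl⟩
    by_cases hij : c i j = 0
    · simp [hij]
    · exact single_mem_graphOS G ((hc i j).mp hij) _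
  · rintro _ ⟨i, j, hij, rfl⟩
    have hcij := (hc i j).mpr hij
    rw [SetLike.mem_coe, ← inv_smul_smul₀ hcij (single i j 1), smul_single, smul_eq_mul, mul_one]
    exact Submodule.smul_mem _ _ (Submodule.subset_span ⟨i, j, rfl⟩)

end GraphOS

section Channel

variable {ι κ : Type*} [Fintype ι] [Fintype κ] [DecidableEq ι]

lemma conjTranspose_map_ofReal_mul_diagonal_mul_apply (B B' : Matrix κ ι ℝ) (d d' : ι → ℂ)
    (j j' : ι) :
    ((B.map ((↑) : ℝ → ℂ) * diagonal d)ᴴ * (B'.map ((↑) : ℝ → ℂ) * diagonal d')) j j' =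
      star (d j) * d' j' * ((Bᵀ j ⬝ᵥ B'ᵀ j' : ℝ) : ℂ) := by
  rw [mul_apply]
  simp only [conjTranspose_apply, mul_diagonal, map_apply, dotProduct, transpose_apply,
    Complex.ofReal_sum, Complex.ofReal_mul, Finset.mul_sum, star_mul', Complex.star_def,
    Complex.conj_ofReal]
  exact Finset.sum_congr rfl fun _ _ => by ring

lemma exists_mem_confGraph_apply_ne_zero_iff {k r : ℕ} {B : Fin r → Matrix (Fin k) ι ℝ}
    (hB : ∀ i a b, 0 ≤ B i a b) {d : Fin r → ι → ℂ} (hd : ∀ i j, d i j ≠ 0) (j j' : ι) :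
    (∃ M ∈ confGraph (fun i => (B i).map ((↑) : ℝ → ℂ) * diagonal (d i)), M j j' ≠ 0) ↔
      (∑ i, (B i)ᵀ j) ⬝ᵥ (∑ i, (B i)ᵀ j') ≠ 0 := by
  have hcol : ∀ i j, 0 ≤ (B i)ᵀ j := fun i j a => hB i a j
  rw [sum_dotProduct, Fintype.sum_ne_zero_iff_of_nonneg fun i => dotProduct_nonneg_of_nonneg
    (hcol i j) (Finset.sum_nonneg fun i' _ => hcol i' j')]
  simp only [dotProduct_sum, Fintype.sum_ne_zero_iff_of_nonneg fun i' =>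
    dotProduct_nonneg_of_nonneg (hcol _ j) (hcol i' j')]
  simp [confGraph, exists_mem_span_apply_ne_zero_iff, -conjTranspose_mul,
    conjTranspose_map_ofReal_mul_diagonal_mul_apply, hd]

end Channel

section Realization

variable {n k : ℕ} {G : SimpleGraph (Fin n)}

lemma exists_isNonnegRep_of_confGraph_eq_graphOS {r : ℕ} {A : Fin r → Matrix (Fin k) (Fin n) ℂ}
    (hA : IsNonCancelling A) (hS : confGraph A = graphOS G) :
    ∃ x : Fin n → Fin k → ℝ, IsNonnegRep G x := by
  choose B d hB hd hBd using hA
  obtain rfl : A = fun i => (B i).map ((↑) : ℝ → ℂ) * diagonal (d i) := funext hBd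
  refine ⟨fun j => ∑ i, (B i)ᵀ j, isNonnegRep_iff.mpr ⟨fun j a => ?_, fun j j' => ?_⟩⟩
  · rw [Finset.sum_apply]
    exact Finset.sum_nonneg fun i _ => hB i a j
  · rw [← exists_mem_confGraph_apply_ne_zero_iff hB hd, hS, exists_mem_graphOS_apply_ne_zero_iff]

lemma exists_channel_of_isNonnegRep {x : Fin n → Fin k → ℝ} (hx : IsNonnegRep G x) :
    ∃ r, ∃ A : Fin r → Matrix (Fin k) (Fin n) ℂ,
      IsKraus A ∧ IsNonCancelling A ∧ confGraph A = graphOS G := by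
  obtain ⟨y, hy, hy1⟩ := hx.exists_normalized
  set B : Fin n → Matrix (Fin k) (Fin n) ℝ := fun i => (of (Pi.single i (y i)))ᵀ
  set A : Fin n → Matrix (Fin k) (Fin n) ℂ :=
    fun i => (B i).map ((↑) : ℝ → ℂ) * diagonal (1 : Fin n → ℂ)
  have hcol : ∀ i j, (B i)ᵀ j = if i = j then y i else 0 := fun i j => by
    ext a
    rcases eq_or_ne i j with rfl | hij
    · simp [B]
    · simp [B, hij, hij.symm]
  have hA : ∀ i j, (A i)ᴴ * A j = single i j ((y i ⬝ᵥ y j : ℝ) : ℂ) := by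
    intro i j
    ext a b
    dsimp only [A]
    rw [conjTranspose_map_ofReal_mul_diagonal_mul_apply, hcol, hcol, single_apply]
    split_ifs <;> simp_all
  refine ⟨n, A, ?_, fun i => ⟨B i, _, fun a b => ?_, fun _ => one_ne_zero, rfl⟩, ?_⟩
  · simp [IsKraus, hA, hy1, sum_single_one]
  · rcases eq_or_ne b i with rfl | hb
    · simpa [B] using hy.2.1 b a
    · simp [B, hb]
  · simp only [confGraph, hA]
    exact span_single_eq_graphOS G fun i j => by exact_mod_cast (isNonnegRep_iff.mp hy).2 i j

lemma exists_channel_iff_exists_isNonnegRep :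
    (∃ r, ∃ A : Fin r → Matrix (Fin k) (Fin n) ℂ,
      IsKraus A ∧ IsNonCancelling A ∧ confGraph A = graphOS G) ↔
      ∃ x : Fin n → Fin k → ℝ, IsNonnegRep G x :=
  ⟨fun ⟨_, _, _, hA, hS⟩ => exists_isNonnegRep_of_confGraph_eq_graphOS hA hS,
    fun ⟨_, hx⟩ => exists_channel_of_isNonnegRep hx⟩

end Realization

/-- for a graph `G` on `{1, …, n}`, `cc(S_G) = cc(G)`; in particular the
infimum defining `cc(S_G)` is finite and attained (i.e. `cc(G)` is the least `k` for
which a non-cancelling channel `M_n → M_k` has confusability graph `S_G`). -/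
theorem cc_graphOS (n : ℕ) (G : SimpleGraph (Fin n)) :
    ccOS (graphOS G) = (ccG G : ℕ∞) ∧
    IsLeast {k : ℕ | ∃ r : ℕ, ∃ A : Fin r → Matrix (Fin k) (Fin n) ℂ,
      IsKraus A ∧ IsNonCancelling A ∧ confGraph A = graphOS G} (ccG G) := by
  obtain ⟨x, hx⟩ := exists_isNonnegRep G
  have hleast : IsLeast {k | ∃ x : Fin n → Fin k → ℝ, IsNonnegRep G x} (ccG G) :=
    isLeast_csInf ⟨_, _, hx.comp_equiv (Fintype.equivFin _).symm⟩
  simp_rw [ccOS, exists_channel_iff_exists_isNonnegRep]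
  refine ⟨IsLeast.csInf_eq ⟨⟨_, rfl, hleast.1⟩, ?_⟩, hleast⟩
  rintro _ ⟨k, rfl, hk⟩
  exact_mod_cast hleast.2 hk
end

section
/- Let S ⊆ M_n be an operator system and, for r ≥ 1, let S^{⊗r} ⊆ M_{n^r} denote the r-fold Kronecker tensor power of S (the span of Kronecker products A_1 ⊗ ⋯ ⊗ A_r with each A_i ∈ S). Then for every r ≥ 1: α(S)^r ≤ α(S^{⊗r}) ≤ β(S)^r. Consequently the zero-error capacity Θ(S) = lim_{r→∞} α(S^{⊗r})^{1/r} satisfies α(S) ≤ Θ(S) ≤ β(S). -/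
open Matrix
open scoped ComplexOrder

/-- An operator system in `M_ι`: a subspace containing `I` and closed under `ᴴ`. -/
def IsOperatorSystem {ι : Type*} [Fintype ι] [DecidableEq ι]
    (S : Submodule ℂ (Matrix ι ι ℂ)) : Prop :=
  (1 : Matrix ι ι ℂ) ∈ S ∧ ∀ A ∈ S, Aᴴ ∈ S

/-- The `r`-fold Kronecker tensor power `S^{⊗r} ⊆ M_{n^r}`: the span of the Kronecker
products `A₁ ⊗ ⋯ ⊗ Aᵣ` with each `Aᵢ ∈ S`. -/
noncomputable def tpowOS {ι : Type*} [Fintype ι] [DecidableEq ι]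
    (S : Submodule ℂ (Matrix ι ι ℂ)) (r : ℕ) :
    Submodule ℂ (Matrix (Fin r → ι) (Fin r → ι) ℂ) :=
  Submodule.span ℂ {M | ∃ A : Fin r → Matrix ι ι ℂ,
    (∀ s, A s ∈ S) ∧ M = Matrix.of fun v w => ∏ s, A s (v s) (w s)}

/-!
An `S`-independent family `x` and Kraus operators `A` with `S_A ⊆ S` interact through
`tr(((A_i)ᴴ A_j)ᴴ x_p x_qᴴ) = ⟨A_j x_q, A_i x_p⟩`: choosing for each `p` a Kraus operator with
`A_i x_p ≠ 0` (one exists since `∑ A_iᴴ A_i = I`) turns `x` into pairwise orthogonal nonzero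
vectors of `ℂ^k`, so `α(S) ≤ k`. The `r`-fold Kronecker power of a channel realising `β(S)` is
a channel into `ℂ^{β(S)^r}` whose confusability graph lies in `S^{⊗r}`, giving the upper bound.
For the lower bound, the Kronecker products of the members of an optimal `S`-independent family
are `S^{⊗r}`-independent, because pairing them with `A_1 ⊗ ⋯ ⊗ A_r` factors into a product of
pairings, one of which vanishes. The bounds on `Θ` follow by taking `r`-th roots.
-/

namespace Matrix

variable {σ ι κ ν R : Type*} [Fintype σ]

def kroneckerPi [CommMonoid R] (A : σ → Matrix ι κ R) : Matrix (σ → ι) (σ → κ) R :=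
  of fun v w => ∏ s, A s (v s) (w s)

def tensorPi [CommMonoid R] (x : σ → ι → R) : (σ → ι) → R :=
  fun v => ∏ s, x s (v s)

section CommSemiring
variable [CommSemiring R]

theorem kroneckerPi_mul [DecidableEq σ] [Fintype κ] (A : σ → Matrix ι κ R)
    (B : σ → Matrix κ ν R) :
    kroneckerPi A * kroneckerPi B = kroneckerPi fun s => A s * B s := by
  ext v w
  simp only [kroneckerPi, mul_apply, of_apply, ← Finset.prod_mul_distrib, Fintype.prod_sum]

theorem sum_kroneckerPi [DecidableEq σ] {α : Type*} [Fintype α] (A : σ → α → Matrix ι κ R) :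
    ∑ g : σ → α, kroneckerPi (fun s => A s (g s)) = kroneckerPi fun s => ∑ a, A s a := by
  ext v w
  simp only [kroneckerPi, sum_apply, of_apply, Fintype.prod_sum]

theorem kroneckerPi_one [DecidableEq ι] : kroneckerPi (fun _ : σ => (1 : Matrix ι ι R)) = 1 := by
  ext v w
  by_cases h : v = w
  · subst h; simp [kroneckerPi]
  · obtain ⟨s, hs⟩ := Function.ne_iff.mp h
    rw [one_apply_ne h, kroneckerPi, of_apply]
    exact Finset.prod_eq_zero (Finset.mem_univ s) (one_apply_ne hs)

theorem kroneckerPi_mulVec [DecidableEq σ] [Fintype κ] (A : σ → Matrix ι κ R) (x : σ → κ → R) :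
    kroneckerPi A *ᵥ tensorPi x = tensorPi fun s => A s *ᵥ x s := by
  ext v
  simp only [kroneckerPi, tensorPi, mulVec, dotProduct, of_apply, ← Finset.prod_mul_distrib,
    Fintype.prod_sum]

theorem tensorPi_dotProduct_tensorPi [DecidableEq σ] [Fintype ι] (x y : σ → ι → R) :
    tensorPi x ⬝ᵥ tensorPi y = ∏ s, x s ⬝ᵥ y s := by
  simp only [tensorPi, dotProduct, ← Finset.prod_mul_distrib, Fintype.prod_sum]

end CommSemiring

theorem conjTranspose_kroneckerPi [CommSemiring R] [StarRing R] (A : σ → Matrix ι κ R) :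
    (kroneckerPi A)ᴴ = kroneckerPi fun s => (A s)ᴴ := by
  ext v w
  simp [kroneckerPi, star_prod]

theorem star_tensorPi [CommSemiring R] [StarRing R] (x : σ → ι → R) :
    star (tensorPi x) = tensorPi (star x) := by
  ext v
  simp [tensorPi, star_prod]

theorem tensorPi_ne_zero [CommMonoidWithZero R] [NoZeroDivisors R] [Nontrivial R]
    {x : σ → ι → R} (hx : ∀ s, x s ≠ 0) : tensorPi x ≠ 0 := by
  choose c hc using fun s => Function.ne_iff.mp (hx s)
  exact Function.ne_iff.mpr ⟨c, Finset.prod_ne_zero_iff.mpr fun s _ => hc s⟩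

theorem trace_mul_vecMulVec [CommSemiring R] [Fintype ι] [Fintype κ] (M : Matrix ι κ R)
    (u : κ → R) (w : ι → R) : trace (M * vecMulVec u w) = w ⬝ᵥ (M *ᵥ u) := by
  rw [mul_vecMulVec, trace_vecMulVec, dotProduct_comm]

theorem trace_kroneckerPi_mul_vecMulVec_tensorPi [DecidableEq σ] [CommSemiring R] [StarRing R]
    [Fintype ι] (C : σ → Matrix ι ι R) (x y : σ → ι → R) :
    trace ((kroneckerPi C)ᴴ * vecMulVec (tensorPi x) (star (tensorPi y))) =
      ∏ s, trace ((C s)ᴴ * vecMulVec (x s) (star (y s))) := by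
  simp only [trace_mul_vecMulVec, conjTranspose_kroneckerPi, kroneckerPi_mulVec, star_tensorPi,
    tensorPi_dotProduct_tensorPi, Pi.star_apply]

theorem card_le_of_pairwise_star_dotProduct_eq_zero {𝕜 τ κ : Type*} [RCLike 𝕜] [Fintype τ]
    [Fintype κ] (y : τ → κ → 𝕜) (hy : ∀ p, y p ≠ 0)
    (h : Pairwise fun p q => star (y p) ⬝ᵥ y q = 0) : Fintype.card τ ≤ Fintype.card κ := by
  have hli : LinearIndependent 𝕜 fun p => WithLp.toLp 2 (y p) :=
    linearIndependent_of_ne_zero_of_inner_eq_zero (by simpa using hy)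
      fun p q hpq => by dsimp only; rw [EuclideanSpace.inner_toLp_toLp, dotProduct_comm, h hpq]
  simpa using hli.fintype_card_le_finrank

end Matrix

section KrausTensorPow

variable {ι : Type*}

noncomputable def krausTensorPow {k r' : ℕ} (A : Fin r' → Matrix (Fin k) ι ℂ) (r : ℕ) :
    Fin (r' ^ r) → Matrix (Fin (k ^ r)) (Fin r → ι) ℂ :=
  fun f => (kroneckerPi fun s => A (finFunctionFinEquiv.symm f s)).submatrix
    finFunctionFinEquiv.symm id

theorem conjTranspose_krausTensorPow_mul {k r' : ℕ} (A : Fin r' → Matrix (Fin k) ι ℂ) (r : ℕ)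
    (f g : Fin (r' ^ r)) :
    (krausTensorPow A r f)ᴴ * krausTensorPow A r g =
      kroneckerPi fun s =>
        (A (finFunctionFinEquiv.symm f s))ᴴ * A (finFunctionFinEquiv.symm g s) := by
  rw [krausTensorPow, krausTensorPow, conjTranspose_submatrix, submatrix_mul_equiv,
    submatrix_id_id, conjTranspose_kroneckerPi, kroneckerPi_mul]

end KrausTensorPow

section OperatorSystem

variable {ι : Type*} [Fintype ι] [DecidableEq ι]

def IsIndepFamily (S : Submodule ℂ (Matrix ι ι ℂ)) {τ : Type*} (x : τ → ι → ℂ) : Prop :=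
  (∀ p, x p ≠ 0) ∧ ∀ p q, p ≠ q → ∀ B ∈ S, trace (Bᴴ * vecMulVec (x p) (star (x q))) = 0

theorem IsKraus.exists_mulVec_ne_zero {k r : ℕ} {A : Fin r → Matrix (Fin k) ι ℂ} (hA : IsKraus A)
    {x : ι → ℂ} (hx : x ≠ 0) : ∃ i, A i *ᵥ x ≠ 0 := by
  by_contra! h
  apply hx
  calc x = (∑ i, (A i)ᴴ * A i) *ᵥ x := by rw [hA, one_mulVec]
    _ = 0 := by simp [sum_mulVec, ← mulVec_mulVec, h]

theorem IsIndepFamily.card_le_of_confGraph_le {S : Submodule ℂ (Matrix ι ι ℂ)} {k r : ℕ}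
    {A : Fin r → Matrix (Fin k) ι ℂ} (hA : IsKraus A) (hS : confGraph A ≤ S) {τ : Type*}
    [Fintype τ] {x : τ → ι → ℂ} (hx : IsIndepFamily S x) : Fintype.card τ ≤ k := by
  choose i hi using fun p => hA.exists_mulVec_ne_zero (hx.1 p)
  simpa using card_le_of_pairwise_star_dotProduct_eq_zero (fun p => A (i p) *ᵥ x p) hi
    fun p q hpq => by
      have := hx.2 q p (Ne.symm hpq) _ (hS (Submodule.subset_span ⟨i q, i p, rfl⟩))
      rwa [trace_mul_vecMulVec, conjTranspose_mul, conjTranspose_conjTranspose,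
        ← mulVec_mulVec, dotProduct_mulVec, ← star_mulVec] at this

theorem IsIndepFamily.card_le {S : Submodule ℂ (Matrix ι ι ℂ)} (h1 : 1 ∈ S) {τ : Type*}
    [Fintype τ] {x : τ → ι → ℂ} (hx : IsIndepFamily S x) : Fintype.card τ ≤ Fintype.card ι :=
  card_le_of_pairwise_star_dotProduct_eq_zero x hx.1 fun p q hpq => by
    simpa [trace_mul_vecMulVec, dotProduct_comm] using hx.2 q p (Ne.symm hpq) 1 h1

theorem alphaOS_le_of_confGraph_le {S : Submodule ℂ (Matrix ι ι ℂ)} {k r : ℕ}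
    {A : Fin r → Matrix (Fin k) ι ℂ} (hA : IsKraus A) (hS : confGraph A ≤ S) : alphaOS S ≤ k :=
  csSup_le' fun m ⟨_, hx⟩ => by simpa using IsIndepFamily.card_le_of_confGraph_le hA hS hx

theorem bddAbove_indepFamily_sizes {S : Submodule ℂ (Matrix ι ι ℂ)} (h1 : 1 ∈ S) :
    BddAbove {m | ∃ x : Fin m → ι → ℂ, IsIndepFamily S x} :=
  ⟨Fintype.card ι, fun m ⟨_, hx⟩ => by simpa using IsIndepFamily.card_le h1 hx⟩

theorem IsIndepFamily.card_le_alphaOS {S : Submodule ℂ (Matrix ι ι ℂ)} (h1 : 1 ∈ S)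
    {τ : Type*} [Fintype τ] {x : τ → ι → ℂ} (hx : IsIndepFamily S x) :
    Fintype.card τ ≤ alphaOS S :=
  le_csSup (bddAbove_indepFamily_sizes h1)
    ⟨x ∘ (Fintype.equivFin τ).symm, fun p => hx.1 _, fun p q hpq => hx.2 _ _ (by simpa using hpq)⟩

theorem exists_isIndepFamily_alphaOS {S : Submodule ℂ (Matrix ι ι ℂ)} (h1 : 1 ∈ S) :
    ∃ x : Fin (alphaOS S) → ι → ℂ, IsIndepFamily S x :=
  Nat.sSup_mem (s := {m | ∃ x : Fin m → ι → ℂ, IsIndepFamily S x})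
    ⟨0, Fin.elim0, fun p => p.elim0, fun p => p.elim0⟩ (bddAbove_indepFamily_sizes h1)

theorem exists_isKraus_betaOS {S : Submodule ℂ (Matrix ι ι ℂ)} (h1 : 1 ∈ S) :
    ∃ r, ∃ A : Fin r → Matrix (Fin (betaOS S)) ι ℂ, IsKraus A ∧ confGraph A ≤ S := by
  refine Nat.sInf_mem
    (s := {k | ∃ r, ∃ A : Fin r → Matrix (Fin k) ι ℂ, IsKraus A ∧ confGraph A ≤ S}) ?_
  -- the identity channel, with its output space relabelled by `Fin (card ι)`
  let e := (Fintype.equivFin ι).symm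
  refine ⟨_, 1, fun _ => (1 : Matrix ι ι ℂ).submatrix e id, ?_, ?_⟩
  · simp [IsKraus, conjTranspose_submatrix, submatrix_mul_equiv]
  · rw [confGraph, Submodule.span_le]
    rintro _ ⟨_, _, rfl⟩
    simpa [conjTranspose_submatrix, submatrix_mul_equiv] using h1

theorem trace_conjTranspose_mul_eq_zero_of_mem_span {s : Set (Matrix ι ι ℂ)} {M : Matrix ι ι ℂ}
    (h : ∀ B ∈ s, trace (Bᴴ * M) = 0) {B : Matrix ι ι ℂ} (hB : B ∈ Submodule.span ℂ s) :
    trace (Bᴴ * M) = 0 := by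
  induction hB using Submodule.span_induction with
  | mem B hB => exact h B hB
  | zero => simp
  | add B C _ _ hB hC => rw [conjTranspose_add, add_mul, trace_add, hB, hC, add_zero]
  | smul c B _ hB => rw [conjTranspose_smul, smul_mul, trace_smul, hB, smul_zero]

theorem kroneckerPi_mem_tpowOS {S : Submodule ℂ (Matrix ι ι ℂ)} {r : ℕ}
    {A : Fin r → Matrix ι ι ℂ} (hA : ∀ s, A s ∈ S) : kroneckerPi A ∈ tpowOS S r :=
  Submodule.subset_span ⟨A, hA, rfl⟩

theorem one_mem_tpowOS {S : Submodule ℂ (Matrix ι ι ℂ)} (h1 : 1 ∈ S) (r : ℕ) :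
    1 ∈ tpowOS S r :=
  kroneckerPi_one (σ := Fin r) (ι := ι) (R := ℂ) ▸ kroneckerPi_mem_tpowOS fun _ => h1

theorem IsIndepFamily.tensorPow {S : Submodule ℂ (Matrix ι ι ℂ)} {τ : Type*} {x : τ → ι → ℂ}
    (hx : IsIndepFamily S x) (r : ℕ) :
    IsIndepFamily (tpowOS S r) fun f : Fin r → τ => tensorPi fun s => x (f s) := by
  refine ⟨fun f => tensorPi_ne_zero fun s => hx.1 (f s), fun f g hfg => ?_⟩
  obtain ⟨s, hs⟩ := Function.ne_iff.mp hfg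
  refine fun B hB => trace_conjTranspose_mul_eq_zero_of_mem_span ?_ hB
  rintro _ ⟨C, hC, rfl⟩
  rw [← kroneckerPi, trace_kroneckerPi_mul_vecMulVec_tensorPi]
  exact Finset.prod_eq_zero (Finset.mem_univ s) (hx.2 _ _ hs _ (hC s))

theorem alphaOS_pow_le_alphaOS_tpowOS {S : Submodule ℂ (Matrix ι ι ℂ)} (h1 : 1 ∈ S) (r : ℕ) :
    alphaOS S ^ r ≤ alphaOS (tpowOS S r) := by
  obtain ⟨x, hx⟩ := exists_isIndepFamily_alphaOS h1
  simpa using (hx.tensorPow r).card_le_alphaOS (one_mem_tpowOS h1 r)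

theorem IsKraus.krausTensorPow {k r' : ℕ} {A : Fin r' → Matrix (Fin k) ι ℂ} (hA : IsKraus A)
    (r : ℕ) : IsKraus (krausTensorPow A r) := by
  unfold IsKraus at hA ⊢
  simp only [conjTranspose_krausTensorPow_mul]
  rw [Equiv.sum_comp finFunctionFinEquiv.symm
      (fun g => kroneckerPi fun s => (A (g s))ᴴ * A (g s)),
    sum_kroneckerPi (fun _ i => (A i)ᴴ * A i), hA, kroneckerPi_one]

theorem confGraph_krausTensorPow_le {S : Submodule ℂ (Matrix ι ι ℂ)} {k r' : ℕ}
    {A : Fin r' → Matrix (Fin k) ι ℂ} (hS : confGraph A ≤ S) (r : ℕ) :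
    confGraph (krausTensorPow A r) ≤ tpowOS S r := by
  rw [confGraph, Submodule.span_le]
  rintro _ ⟨f, g, rfl⟩
  rw [conjTranspose_krausTensorPow_mul]
  exact kroneckerPi_mem_tpowOS fun s => hS (Submodule.subset_span ⟨_, _, rfl⟩)

theorem alphaOS_tpowOS_le_betaOS_pow {S : Submodule ℂ (Matrix ι ι ℂ)} (h1 : 1 ∈ S) (r : ℕ) :
    alphaOS (tpowOS S r) ≤ betaOS S ^ r := by
  obtain ⟨r', A, hA, hS⟩ := exists_isKraus_betaOS h1
  exact alphaOS_le_of_confGraph_le (hA.krausTensorPow r) (confGraph_krausTensorPow_le hS r)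

end OperatorSystem

section Root

open Filter Topology

variable {u : ℕ → ℝ} {Θ : ℝ}

theorem le_of_tendsto_root_of_pow_le {a : ℝ} (ha : 0 ≤ a) (h : ∀ r, 1 ≤ r → a ^ r ≤ u r)
    (hu : Tendsto (fun r : ℕ => u r ^ ((1 : ℝ) / r)) atTop (𝓝 Θ)) : a ≤ Θ :=
  ge_of_tendsto hu <| eventually_atTop.mpr ⟨1, fun r hr => calc
    a = (a ^ r) ^ ((1 : ℝ) / r) := by rw [one_div, Real.pow_rpow_inv_natCast ha (by omega)]
    _ ≤ u r ^ ((1 : ℝ) / r) := by gcongr; exact h r hr⟩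

theorem le_of_tendsto_root_of_le_pow {c : ℝ} (hc : 0 ≤ c) (hu0 : ∀ r, 0 ≤ u r)
    (h : ∀ r, 1 ≤ r → u r ≤ c ^ r)
    (hu : Tendsto (fun r : ℕ => u r ^ ((1 : ℝ) / r)) atTop (𝓝 Θ)) : Θ ≤ c :=
  le_of_tendsto hu <| eventually_atTop.mpr ⟨1, fun r hr => calc
    u r ^ ((1 : ℝ) / r) ≤ (c ^ r) ^ ((1 : ℝ) / r) := by gcongr; exacts [hu0 r, h r hr]
    _ = c := by rw [one_div, Real.pow_rpow_inv_natCast hc (by omega)]⟩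

end Root

open Filter in
/-- `α(S)^r ≤ α(S^{⊗r}) ≤ β(S)^r` for all `r ≥ 1`; consequently the
zero-error capacity `Θ(S) = lim_r α(S^{⊗r})^{1/r}` satisfies `α(S) ≤ Θ(S) ≤ β(S)`. -/
theorem capacity_bounds (n : ℕ) (S : Submodule ℂ (Matrix (Fin n) (Fin n) ℂ))
    (hS : IsOperatorSystem S) :
    (∀ r : ℕ, 1 ≤ r →
      alphaOS S ^ r ≤ alphaOS (tpowOS S r) ∧ alphaOS (tpowOS S r) ≤ betaOS S ^ r) ∧
    ∀ Θ : ℝ, Tendsto (fun r : ℕ => (alphaOS (tpowOS S r) : ℝ) ^ ((1 : ℝ) / r))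
        atTop (nhds Θ) →
      (alphaOS S : ℝ) ≤ Θ ∧ Θ ≤ (betaOS S : ℝ) := by
  have lower := alphaOS_pow_le_alphaOS_tpowOS hS.1
  have upper := alphaOS_tpowOS_le_betaOS_pow hS.1
  refine ⟨fun r _ => ⟨lower r, upper r⟩, fun Θ hΘ => ⟨?_, ?_⟩⟩
  · exact le_of_tendsto_root_of_pow_le (Nat.cast_nonneg _)
      (fun r _ => by exact_mod_cast lower r) hΘ
  · exact le_of_tendsto_root_of_le_pow (Nat.cast_nonneg _) (fun _ => Nat.cast_nonneg _)
      (fun r _ => by exact_mod_cast upper r) hΘ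
end

section
/- For every integer k ≥ 2: β(S_k ⊗ S_{k²}) ≤ k² < k³ ≤ ϑ(S_k ⊗ S_{k²}), where S_k ⊗ S_{k²} ⊆ M_{k³} is the Kronecker tensor product of the operator systems S_k ⊆ M_k and S_{k²} ⊆ M_{k²}. -/
open Matrix
open scoped ComplexOrder

/-- The Lovász theta number `ϑ(S) = max{‖I + K‖ : K ∈ S^⊥, I + K ≥ 0}`, where `‖·‖`
is the operator (spectral) norm. -/
noncomputable def thetaOS {ι : Type*} [Fintype ι] [DecidableEq ι]
    (S : Submodule ℂ (Matrix ι ι ℂ)) : ℝ :=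
  sSup {t | ∃ K : Matrix ι ι ℂ, (∀ B ∈ S, Matrix.trace (Bᴴ * K) = 0) ∧
    (1 + K).PosSemidef ∧ t = ‖Matrix.toEuclideanCLM (𝕜 := ℂ) (n := ι) (1 + K)‖}

/-- The tensor product of operator systems: the span of the Kronecker products
`A ⊗ B` with `A ∈ S₁`, `B ∈ S₂`. -/
noncomputable def tensorOS {ι₁ ι₂ : Type*} [Fintype ι₁] [DecidableEq ι₁]
    [Fintype ι₂] [DecidableEq ι₂] (S₁ : Submodule ℂ (Matrix ι₁ ι₁ ℂ))
    (S₂ : Submodule ℂ (Matrix ι₂ ι₂ ℂ)) :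
    Submodule ℂ (Matrix (ι₁ × ι₂) (ι₁ × ι₂) ℂ) :=
  Submodule.span ℂ {C | ∃ A ∈ S₁, ∃ B ∈ S₂, C = Matrix.kroneckerMap (· * ·) A B}

/-- The operator system `S_k ⊆ M_k` of all matrices whose diagonal entries are all equal. -/
noncomputable def constDiagOS (k : ℕ) : Submodule ℂ (Matrix (Fin k) (Fin k) ℂ) where
  carrier := {A | ∀ i j, A i i = A j j}
  add_mem' := by intro a b ha hb i j; simp only [Matrix.add_apply, ha i j, hb i j]
  zero_mem' := by intro i j; simp
  smul_mem' := by intro c a ha i j; simp only [Matrix.smul_apply, ha i j]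

/-!
For `β`, identify `Fin k` with `ZMod k` and `Fin (k²)` with `ZMod k × ZMod k`, and let `ψ` be a
primitive additive character of `ZMod k`. The `k` maps
`B_s e_(i,c,d) = ψ((s + i)(c + s)) e_(c+s, d+s+i)` satisfy `∑ₛ B_sᴴ B_s = k • 1` by orthogonality
of characters. Every `B_sᴴ B_t` has diagonal blocks that do not depend on `i` and have constant
diagonal, and off-diagonal blocks that vanish on the diagonal, so `B_sᴴ B_t ∈ S_k ⊗ S_{k²}`;
rescaled, the `B_s` are Kraus operators into `M_{k²}`.

For `ϑ`, the trace of every element of `S_k ⊗ S_{k²}` is `k³` times its `(0, 0)` entry, so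
`K = k³ E₀₀ - 1` is orthogonal to it, and `1 + K = k³ E₀₀ ≥ 0` has norm `k³`. The set defining `ϑ`
is bounded: `1 ∈ S` forces `tr K = 0`, so `‖1 + K‖ ≤ tr (1 + K) = k³` for every admissible `K`.
-/

lemma one_mem_constDiagOS (n : ℕ) : (1 : Matrix (Fin n) (Fin n) ℂ) ∈ constDiagOS n :=
  fun i j => by simp

lemma single_mem_constDiagOS {n : ℕ} {a b : Fin n} (hab : a ≠ b) (c : ℂ) :
    single a b c ∈ constDiagOS n :=
  fun i j => by
    have hne : ∀ i, ¬(a = i ∧ b = i) := fun i h => hab (h.1.trans h.2.symm)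
    simp [hne]

lemma trace_eq_of_mem_constDiagOS {n : ℕ} {A : Matrix (Fin n) (Fin n) ℂ}
    (hA : A ∈ constDiagOS n) (i : Fin n) : trace A = n * A i i := by
  simp [trace, hA _ i]

lemma one_mem_tensorOS_constDiagOS (m n : ℕ) :
    (1 : Matrix (Fin m × Fin n) (Fin m × Fin n) ℂ) ∈ tensorOS (constDiagOS m) (constDiagOS n) :=
  Submodule.subset_span ⟨1, one_mem_constDiagOS m, 1, one_mem_constDiagOS n, one_kronecker_one.symm⟩

lemma trace_eq_of_mem_tensorOS_constDiagOS {m n : ℕ}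
    {M : Matrix (Fin m × Fin n) (Fin m × Fin n) ℂ}
    (hM : M ∈ tensorOS (constDiagOS m) (constDiagOS n)) (x : Fin m × Fin n) :
    trace M = m * n * M x x := by
  induction hM using Submodule.span_induction with
  | mem _ h =>
    obtain ⟨A, hA, B, hB, rfl⟩ := h
    rw [trace_kronecker, trace_eq_of_mem_constDiagOS hA x.1, trace_eq_of_mem_constDiagOS hB x.2,
      kroneckerMap_apply]
    ring
  | zero => simp
  | add _ _ _ _ hM hM' => simp [hM, hM', mul_add]
  | smul c _ _ hM => simp [hM]; ring

lemma sum_kroneckerMap_single_blocks {α β γ : Type*} [Fintype α] [DecidableEq α]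
    (N : Matrix (α × β) (α × γ) ℂ) :
    ∑ a, ∑ b, kroneckerMap (· * ·) (single a b (1 : ℂ)) (of fun x y => N (a, x) (b, y)) = N := by
  ext ⟨a, x⟩ ⟨b, y⟩
  simp [Matrix.sum_apply, single_apply, ite_and]

lemma mem_tensorOS_constDiagOS {m n : ℕ} {N : Matrix (Fin m × Fin n) (Fin m × Fin n) ℂ}
    {C : Matrix (Fin n) (Fin n) ℂ} (hC : C ∈ constDiagOS n)
    (hdiag : ∀ a x y, N (a, x) (a, y) = C x y)
    (hoff : ∀ a b, a ≠ b → (of fun x y => N (a, x) (b, y)) ∈ constDiagOS n) :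
    N ∈ tensorOS (constDiagOS m) (constDiagOS n) := by
  have hC' : kroneckerMap (· * ·) 1 C ∈ tensorOS (constDiagOS m) (constDiagOS n) :=
    Submodule.subset_span ⟨1, one_mem_constDiagOS m, C, hC, rfl⟩
  suffices N - kroneckerMap (· * ·) 1 C ∈ tensorOS (constDiagOS m) (constDiagOS n) by
    simpa using add_mem this hC'
  rw [← sum_kroneckerMap_single_blocks (N - _)]
  refine Submodule.sum_mem _ fun a _ => Submodule.sum_mem _ fun b _ => ?_
  by_cases hab : a = b
  · subst hab
    have hblock :
        (of fun x y => (N - kroneckerMap (· * ·) 1 C : Matrix _ _ ℂ) (a, x) (a, y)) = 0 := by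
      ext x y
      simp [hdiag]
    rw [hblock, kroneckerMap_zero_right _ fun _ => mul_zero _]
    exact zero_mem _
  · refine Submodule.subset_span ⟨_, single_mem_constDiagOS hab 1, _, ?_, rfl⟩
    simpa [hab] using hoff a b hab

lemma betaOS_le_card {ι κ ρ : Type*} [Fintype ι] [DecidableEq ι] [Fintype κ] [Fintype ρ]
    {S : Submodule ℂ (Matrix ι ι ℂ)} (B : ρ → Matrix κ ι ℂ) {c : ℝ} (hc : 0 < c)
    (hsum : ∑ r, (B r)ᴴ * B r = (c : ℂ) • 1) (hmem : ∀ r r', (B r)ᴴ * B r' ∈ S) :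
    betaOS S ≤ Fintype.card κ := by
  let eκ := Fintype.equivFin κ
  let eρ := Fintype.equivFin ρ
  let A : Fin (Fintype.card ρ) → Matrix (Fin (Fintype.card κ)) ι ℂ := fun i =>
    (Real.sqrt c : ℂ)⁻¹ • (B (eρ.symm i)).submatrix eκ.symm id
  have hA : ∀ i j, (A i)ᴴ * A j = (c : ℂ)⁻¹ • ((B (eρ.symm i))ᴴ * B (eρ.symm j)) := by
    intro i j
    have hsqrt : star (Real.sqrt c : ℂ)⁻¹ * (Real.sqrt c : ℂ)⁻¹ = (c : ℂ)⁻¹ := by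
      rw [star_inv₀, Complex.star_def, Complex.conj_ofReal, ← mul_inv, ← Complex.ofReal_mul,
        Real.mul_self_sqrt hc.le]
    rw [conjTranspose_smul, conjTranspose_submatrix, Matrix.smul_mul, Matrix.mul_smul, smul_smul,
      hsqrt, submatrix_mul_equiv, submatrix_id_id]
  refine Nat.sInf_le ⟨_, A, ?_, ?_⟩
  · simp only [IsKraus, hA, ← Finset.smul_sum, Equiv.sum_comp eρ.symm fun r => (B r)ᴴ * B r,
      hsum, smul_smul]
    rw [inv_mul_cancel₀ (by exact_mod_cast hc.ne'), one_smul]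
  · rw [confGraph, Submodule.span_le]
    rintro _ ⟨i, j, rfl⟩
    rw [hA]
    exact Submodule.smul_mem _ _ (hmem _ _)

def weightedMapMatrix {ι κ : Type*} [DecidableEq κ] (f : ι → κ) (w : ι → ℂ) : Matrix κ ι ℂ :=
  of fun y x => if y = f x then w x else 0

lemma conjTranspose_weightedMapMatrix_mul {ι κ : Type*} [Fintype κ] [DecidableEq κ]
    (f g : ι → κ) (v w : ι → ℂ) :
    (weightedMapMatrix f v)ᴴ * weightedMapMatrix g w =
      of fun x x' => if f x = g x' then star (v x) * w x' else 0 := by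
  ext x x'
  simp [weightedMapMatrix, mul_apply, apply_ite star, ite_mul, mul_ite, eq_comm]

lemma AddChar.star_apply_mul_apply {G : Type*} [AddCommGroup G] [Finite G] (ψ : AddChar G ℂ)
    (a b : G) : star (ψ a) * ψ b = ψ (b - a) := by
  rw [Complex.star_def, ← AddChar.map_neg_eq_conj, ← AddChar.map_add_eq_mul, neg_add_eq_sub]

section CharKraus

variable {R : Type*} [CommRing R] [Fintype R] [DecidableEq R] (ψ : AddChar R ℂ)

def charKraus (s : R) : Matrix (R × R) (R × R × R) ℂ :=
  weightedMapMatrix (fun x => (x.2.1 + s, x.2.2 + s + x.1)) (fun x => ψ ((s + x.1) * (x.2.1 + s)))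

lemma conjTranspose_charKraus_mul_apply (s t : R) (x x' : R × R × R) :
    ((charKraus ψ s)ᴴ * charKraus ψ t) x x' =
      if x.2.1 + s = x'.2.1 + t ∧ x.2.2 + s + x.1 = x'.2.2 + t + x'.1 then
        ψ ((t + x'.1) * (x'.2.1 + t) - (s + x.1) * (x.2.1 + s)) else 0 := by
  rw [charKraus, charKraus, conjTranspose_weightedMapMatrix_mul, of_apply]
  simp only [Prod.mk.injEq, AddChar.star_apply_mul_apply]

lemma conjTranspose_charKraus_mul_apply_self (s t : R) (x : R × R × R) :
    ((charKraus ψ s)ᴴ * charKraus ψ t) x x = if s = t then 1 else 0 := by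
  rw [conjTranspose_charKraus_mul_apply]
  by_cases hst : s = t <;> simp [hst]

lemma conjTranspose_charKraus_mul_apply_of_ne (s t : R) {i j : R} (hij : i ≠ j) (u : R × R) :
    ((charKraus ψ s)ᴴ * charKraus ψ t) (i, u) (j, u) = 0 := by
  rw [conjTranspose_charKraus_mul_apply, if_neg]
  rintro ⟨hs, hi⟩
  obtain rfl : s = t := add_left_cancel hs
  exact hij (add_left_cancel hi)

lemma conjTranspose_charKraus_mul_apply_diag_block (s t i : R) (u u' : R × R) :
    ((charKraus ψ s)ᴴ * charKraus ψ t) (i, u) (i, u') =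
      ((charKraus ψ s)ᴴ * charKraus ψ t) (0, u) (0, u') := by
  simp only [conjTranspose_charKraus_mul_apply, add_zero, add_left_inj]
  refine ite_congr rfl (fun h => ?_) fun _ => rfl
  rw [← h.1]
  ring_nf

variable {ψ}

lemma sum_conjTranspose_charKraus_mul_self (hψ : ψ.IsPrimitive) :
    ∑ s, (charKraus ψ s)ᴴ * charKraus ψ s = (Fintype.card R : ℂ) • 1 := by
  ext ⟨i, c, d⟩ ⟨j, c', d'⟩
  simp only [Matrix.sum_apply, conjTranspose_charKraus_mul_apply, add_left_inj,
    add_right_comm _ _ i, add_right_comm _ _ j]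
  by_cases h : c = c' ∧ d + i = d' + j
  · obtain ⟨rfl, hd⟩ := h
    have hterm : ∀ s, ψ ((s + j) * (c + s) - (s + i) * (c + s)) =
        ψ ((j - i) * c) * ψ (s * (j - i)) := by
      intro s
      rw [← AddChar.map_add_eq_mul]
      ring_nf
    simp only [hd, and_self, if_true, hterm, ← Finset.mul_sum, AddChar.sum_mulShift _ hψ,
      sub_eq_zero]
    by_cases hij : j = i
    · subst hij
      obtain rfl := add_right_cancel hd
      simp
    · simp [hij, Ne.symm hij]
  · have hne : ((i, c, d) : R × R × R) ≠ (j, c', d') := by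
      rintro ⟨⟩
      exact h ⟨rfl, rfl⟩
    simp [h, hne]

lemma submatrix_conjTranspose_charKraus_mul_mem_tensorOS {m n : ℕ} (e₁ : Fin m ≃ R)
    (e₂ : Fin n ≃ R × R) (s t : R) :
    ((charKraus ψ s)ᴴ * charKraus ψ t).submatrix (Prod.map e₁ e₂) (Prod.map e₁ e₂) ∈
      tensorOS (constDiagOS m) (constDiagOS n) := by
  refine mem_tensorOS_constDiagOS
    (C := of fun z z' => ((charKraus ψ s)ᴴ * charKraus ψ t) (0, e₂ z) (0, e₂ z')) ?_ ?_ ?_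
  · intro z z'
    simp [conjTranspose_charKraus_mul_apply_self]
  · intro a z z'
    simp [conjTranspose_charKraus_mul_apply_diag_block]
  · intro a b hab z z'
    simp [conjTranspose_charKraus_mul_apply_of_ne ψ s t (e₁.injective.ne hab)]

lemma betaOS_tensorOS_constDiagOS_le (hψ : ψ.IsPrimitive) {m n : ℕ}
    (hm : Fintype.card R = m) (hn : Fintype.card R ^ 2 = n) :
    betaOS (tensorOS (constDiagOS m) (constDiagOS n)) ≤ n := by
  have hn' : Fintype.card (R × R) = n := by rw [Fintype.card_prod, ← sq, hn]
  let e := (Fintype.equivFinOfCardEq hm).symm.prodCongr (Fintype.equivFinOfCardEq hn').symm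
  have hgram : ∀ s t, ((charKraus ψ s).submatrix id e)ᴴ * (charKraus ψ t).submatrix id e =
      ((charKraus ψ s)ᴴ * charKraus ψ t).submatrix e e := fun s t => by
    rw [conjTranspose_submatrix, ← submatrix_mul_equiv _ _ _ (Equiv.refl _)]
    rfl
  have key := betaOS_le_card (S := tensorOS (constDiagOS m) (constDiagOS n))
    (fun s => (charKraus ψ s).submatrix id e) (c := Fintype.card R) (by positivity) ?_
    (fun s t => hgram s t ▸ submatrix_conjTranspose_charKraus_mul_mem_tensorOS _ _ s t)
  · rwa [hn'] at key
  · ext x y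
    simp only [hgram, Matrix.sum_apply, submatrix_apply]
    rw [← Matrix.sum_apply, sum_conjTranspose_charKraus_mul_self hψ]
    simp [one_apply, e.injective.eq_iff]

end CharKraus

section Theta

open scoped MatrixOrder Matrix.Norms.L2Operator

variable {ι : Type*} [Fintype ι] [DecidableEq ι]

lemma norm_toEuclideanCLM_le_re_trace {M : Matrix ι ι ℂ} (hM : M.PosSemidef) :
    ‖toEuclideanCLM (𝕜 := ℂ) (n := ι) M‖ ≤ (trace M).re := by
  rw [← cstar_norm_def]
  cases isEmpty_or_nonempty ι
  · simp [Subsingleton.elim M 0]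
  obtain ⟨i, hi⟩ : ‖M‖ ∈ Set.range hM.isHermitian.eigenvalues := by
    rw [← hM.isHermitian.spectrum_real_eq_range_eigenvalues]
    exact CStarAlgebra.norm_mem_spectrum_of_nonneg (nonneg_iff_posSemidef.mpr hM)
  rw [← hi, hM.isHermitian.trace_eq_sum_eigenvalues, Complex.re_sum]
  simp only [Complex.coe_algebraMap, Complex.ofReal_re]
  exact Finset.single_le_sum (fun j _ => hM.eigenvalues_nonneg j) (Finset.mem_univ i)

lemma le_thetaOS {S : Submodule ℂ (Matrix ι ι ℂ)} (hS : 1 ∈ S) {K : Matrix ι ι ℂ}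
    (hK : ∀ B ∈ S, trace (Bᴴ * K) = 0) (hpos : (1 + K).PosSemidef) :
    ‖toEuclideanCLM (𝕜 := ℂ) (n := ι) (1 + K)‖ ≤ thetaOS S := by
  refine le_csSup ⟨Fintype.card ι, ?_⟩ ⟨K, hK, hpos, rfl⟩
  rintro _ ⟨K', hK', hpos', rfl⟩
  have htrace : trace K' = 0 := by simpa using hK' 1 hS
  refine (norm_toEuclideanCLM_le_re_trace hpos').trans ?_
  simp [htrace]

lemma card_le_thetaOS {S : Submodule ℂ (Matrix ι ι ℂ)} (hS : 1 ∈ S) (x₀ : ι)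
    (htrace : ∀ M ∈ S, trace M = Fintype.card ι * M x₀ x₀) :
    (Fintype.card ι : ℝ) ≤ thetaOS S := by
  have hK : ∀ B ∈ S, trace (Bᴴ * (diagonal (Pi.single x₀ (Fintype.card ι : ℂ)) - 1)) = 0 := by
    intro B hB
    rw [mul_sub, mul_one, trace_sub, diagonal_single, trace_mul_single, trace_conjTranspose,
      htrace B hB]
    simp [mul_comm]
  have hpos : (diagonal (Pi.single x₀ (Fintype.card ι : ℂ))).PosSemidef := by
    refine PosSemidef.diagonal fun x => ?_
    by_cases hx : x = x₀ <;> simp [hx]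
  have key := le_thetaOS hS hK (by rwa [add_sub_cancel])
  rwa [add_sub_cancel, ← cstar_norm_def, l2_opNorm_diagonal, Pi.norm_single,
    Complex.norm_natCast] at key

end Theta

lemma mul_le_thetaOS_tensorOS_constDiagOS (m n : ℕ) [NeZero m] [NeZero n] :
    (m * n : ℝ) ≤ thetaOS (tensorOS (constDiagOS m) (constDiagOS n)) := by
  have key := card_le_thetaOS (one_mem_tensorOS_constDiagOS m n) (0, 0) fun M hM => by
    simp [trace_eq_of_mem_tensorOS_constDiagOS hM (0, 0)]
  simpa using key

/-- for `k ≥ 2`, `β(S_k ⊗ S_{k²}) ≤ k² < k³ ≤ ϑ(S_k ⊗ S_{k²})`. -/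
theorem beta_lt_theta (k : ℕ) (hk : 2 ≤ k) :
    betaOS (tensorOS (constDiagOS k) (constDiagOS (k ^ 2))) ≤ k ^ 2 ∧
    k ^ 2 < k ^ 3 ∧
    ((k : ℝ) ^ 3 ≤ thetaOS (tensorOS (constDiagOS k) (constDiagOS (k ^ 2)))) := by
  have : NeZero k := ⟨by omega⟩
  refine ⟨betaOS_tensorOS_constDiagOS_le (ZMod.isPrimitive_stdAddChar k) (ZMod.card k)
      (by rw [ZMod.card]), Nat.pow_lt_pow_right (by omega) (by omega), ?_⟩
  have key := mul_le_thetaOS_tensorOS_constDiagOS k (k ^ 2)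
  push_cast at key
  linarith [show (k : ℝ) ^ 3 = k * k ^ 2 by ring]
end

section
/- For every real C > 0 there exist n ∈ ℕ and an operator system S ⊆ M_n with ϑ(S) > C·β(S), and there exist n' ∈ ℕ and an operator system S' ⊆ M_{n'} with ϑ(S') > C·γ(S'). That is, the ratios ϑ/β and ϑ/γ are unbounded over operator systems. -/
open Matrix
open scoped ComplexOrder

/-!
The partial trace channel `M_k ⊗ M_k → M_k`, with Kraus operators `⟨i| ⊗ I`, has output
dimension `k` and confusability graph `S = M_k ⊗ I`, so `β(S), γ(S) ≤ k`. With
`Ω = ∑ₐ |a⟩ ⊗ |a⟩`, the matrix `I + K = k |Ω⟩⟨Ω|` is positive and `K ⊥ S`, because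
`tr((E_ij ⊗ I) k |Ω⟩⟨Ω|) = k δ_ij = tr(E_ij ⊗ I)`; its norm `k ‖Ω‖² = k²` gives `ϑ(S) ≥ k²`.
The set whose supremum is `ϑ(S)` is bounded (so the `sSup` is not the junk value `0`) since
`‖P‖ ≤ tr P` for `P ≥ 0` and `tr (I + K) = tr I` for `K ⊥ I`.
-/

open scoped Matrix.Norms.L2Operator in
theorem Matrix.PosSemidef.norm_toEuclideanCLM_le_re_trace {𝕜 n : Type*} [RCLike 𝕜] [Fintype n]
    [DecidableEq n] {M : Matrix n n 𝕜} (hM : M.PosSemidef) :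
    ‖toEuclideanCLM (𝕜 := 𝕜) (n := n) M‖ ≤ RCLike.re M.trace := by
  have hnorm : ‖M‖ = ‖(RCLike.ofReal ∘ hM.1.eigenvalues : n → 𝕜)‖ := by
    conv_lhs => rw [hM.1.spectral_theorem]
    rw [Unitary.conjStarAlgAut_apply, ← Unitary.coe_star, CStarRing.norm_mul_coe_unitary,
      CStarRing.norm_coe_unitary_mul, l2_opNorm_diagonal]
  have hev := hM.eigenvalues_nonneg
  rw [← cstar_norm_def, hnorm, hM.1.trace_eq_sum_eigenvalues]
  simp only [map_sum, RCLike.ofReal_re]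
  refine pi_norm_le_iff_of_nonneg (Finset.sum_nonneg fun j _ => hev j) |>.mpr fun i => ?_
  simpa [abs_of_nonneg (hev i)] using
    Finset.single_le_sum (fun j _ => hev j) (Finset.mem_univ i)

theorem Matrix.norm_le_norm_toEuclideanCLM_of_mulVec_eq_smul {𝕜 n : Type*} [RCLike 𝕜] [Fintype n]
    [DecidableEq n] {M : Matrix n n 𝕜} {v : n → 𝕜} (hv : v ≠ 0) {c : 𝕜} (h : M *ᵥ v = c • v) :
    ‖c‖ ≤ ‖toEuclideanCLM (𝕜 := 𝕜) (n := n) M‖ := by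
  have hv' : 0 < ‖WithLp.toLp 2 v‖ := norm_pos_iff.mpr (by simpa using hv)
  have := (toEuclideanCLM (𝕜 := 𝕜) (n := n) M).le_opNorm (WithLp.toLp 2 v)
  rw [toEuclideanCLM_toLp, h, WithLp.toLp_smul, norm_smul] at this
  exact le_of_mul_le_mul_right this hv'

theorem Matrix.trace_conjTranspose_mul_mul_vecMulVec {R m n : Type*} [CommSemiring R] [StarRing R]
    [Fintype m] [Fintype n] (A B : Matrix m n R) (v : n → R) :
    trace (Aᴴ * B * vecMulVec v (star v)) = star (A *ᵥ v) ⬝ᵥ (B *ᵥ v) := by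
  rw [mul_vecMulVec, trace_vecMulVec, dotProduct_comm, star_mulVec, ← dotProduct_mulVec,
    mulVec_mulVec]

section Channel

variable {ι : Type*} [Fintype ι] [DecidableEq ι] {k r : ℕ} {A : Fin r → Matrix (Fin k) ι ℂ}

theorem isOperatorSystem_confGraph (hA : IsKraus A) : IsOperatorSystem (confGraph A) := by
  refine ⟨hA ▸ Submodule.sum_mem _ fun i _ => Submodule.subset_span ⟨i, i, rfl⟩, fun B hB => ?_⟩
  induction hB using Submodule.span_induction with
  | mem B hB =>
    obtain ⟨i, j, rfl⟩ := hB
    rw [conjTranspose_mul, conjTranspose_conjTranspose]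
    exact Submodule.subset_span ⟨j, i, rfl⟩
  | zero => simp
  | add B B' _ _ hB hB' => simpa using Submodule.add_mem _ hB hB'
  | smul c B _ hB => simpa using Submodule.smul_mem _ (star c) hB

theorem betaOS_le (hA : IsKraus A) {S : Submodule ℂ (Matrix ι ι ℂ)} (hS : confGraph A ≤ S) :
    betaOS S ≤ k :=
  Nat.sInf_le ⟨r, A, hA, hS⟩

theorem gammaOS_confGraph_le (hA : IsKraus A) : gammaOS (confGraph A) ≤ k :=
  Nat.sInf_le ⟨r, A, hA, rfl⟩

theorem trace_conjTranspose_mul_eq_zero_of_mem_confGraph {K : Matrix ι ι ℂ}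
    (hK : ∀ i j, trace ((A i)ᴴ * A j * K) = 0) {B : Matrix ι ι ℂ} (hB : B ∈ confGraph A) :
    trace (Bᴴ * K) = 0 := by
  induction hB using Submodule.span_induction with
  | mem B hB =>
    obtain ⟨i, j, rfl⟩ := hB
    simpa using hK j i
  | zero => simp
  | add B B' _ _ hB hB' => simp [add_mul, hB, hB']
  | smul c B _ hB => simp [hB]

end Channel

theorem norm_toEuclideanCLM_le_thetaOS {ι : Type*} [Fintype ι] [DecidableEq ι]
    {S : Submodule ℂ (Matrix ι ι ℂ)} (hS : (1 : Matrix ι ι ℂ) ∈ S) {K : Matrix ι ι ℂ}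
    (hK : ∀ B ∈ S, trace (Bᴴ * K) = 0) (hK₁ : (1 + K).PosSemidef) :
    ‖toEuclideanCLM (𝕜 := ℂ) (n := ι) (1 + K)‖ ≤ thetaOS S := by
  refine le_csSup ⟨Fintype.card ι, ?_⟩ ⟨K, hK, hK₁, rfl⟩
  rintro t ⟨K', hK', hK'₁, rfl⟩
  have htrace : trace K' = 0 := by simpa using hK' 1 hS
  simpa [trace_add, htrace] using hK'₁.norm_toEuclideanCLM_le_re_trace

section PartialTrace

variable {ι : Type*} [Fintype ι] {k : ℕ} (e : ι ≃ Fin k × Fin k)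

def maxEntangled : ι → ℂ := fun x => if (e x).1 = (e x).2 then 1 else 0

theorem star_maxEntangled_dotProduct : star (maxEntangled e) ⬝ᵥ maxEntangled e = k := by
  rw [dotProduct, ← e.symm.sum_comp]
  simp [maxEntangled, Fintype.sum_prod_type]

variable [DecidableEq ι]

/-- The Kraus operator `⟨i| ⊗ I` of the partial trace over the first factor, `ι` being identified
with `Fin k × Fin k` through `e`. -/
def partialTraceKraus (i : Fin k) : Matrix (Fin k) ι ℂ :=
  (1 : Matrix ι ι ℂ).submatrix (fun a => e.symm (i, a)) id

theorem partialTraceKraus_mul_conjTranspose (i j : Fin k) :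
    partialTraceKraus e i * (partialTraceKraus e j)ᴴ = if i = j then 1 else 0 := by
  rw [partialTraceKraus, partialTraceKraus, conjTranspose_submatrix, conjTranspose_one,
    ← submatrix_mul _ _ _ _ _ Function.bijective_id, mul_one]
  ext a b
  by_cases hij : i = j <;> simp [one_apply, hij]

theorem isKraus_partialTraceKraus : IsKraus (partialTraceKraus e) := by
  ext x y
  conv_rhs => rw [← mul_one (1 : Matrix ι ι ℂ), mul_apply, ← Equiv.sum_comp e.symm,
    Fintype.sum_prod_type]
  simp only [Matrix.sum_apply, partialTraceKraus, conjTranspose_submatrix, conjTranspose_one,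
    mul_apply, submatrix_apply]
  rfl

theorem partialTraceKraus_mulVec_maxEntangled (i : Fin k) :
    partialTraceKraus e i *ᵥ maxEntangled e = Pi.single i 1 := by
  rw [partialTraceKraus, ← Equiv.coe_refl, submatrix_mulVec_equiv, one_mulVec]
  ext a
  simp [maxEntangled, Pi.single_apply, eq_comm]

theorem trace_conjTranspose_partialTraceKraus_mul (i j : Fin k) :
    trace ((partialTraceKraus e i)ᴴ * partialTraceKraus e j) = if i = j then (k : ℂ) else 0 := by
  rw [trace_mul_comm, partialTraceKraus_mul_conjTranspose]
  by_cases hij : i = j <;> simp [hij, eq_comm]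

theorem sq_le_thetaOS_confGraph_partialTraceKraus (hk : 0 < k) :
    (k : ℝ) ^ 2 ≤ thetaOS (confGraph (partialTraceKraus e)) := by
  set v := maxEntangled e
  have hv : star v ⬝ᵥ v = k := star_maxEntangled_dotProduct e
  have hK : ∀ i j, trace ((partialTraceKraus e i)ᴴ * partialTraceKraus e j *
      ((k : ℂ) • vecMulVec v (star v) - 1)) = 0 := by
    intro i j
    rw [mul_sub, mul_one, mul_smul_comm, trace_sub, trace_smul,
      trace_conjTranspose_mul_mul_vecMulVec, partialTraceKraus_mulVec_maxEntangled,
      partialTraceKraus_mulVec_maxEntangled, trace_conjTranspose_partialTraceKraus_mul]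
    by_cases hij : i = j <;> simp [hij]
  have hθ := norm_toEuclideanCLM_le_thetaOS
    (isOperatorSystem_confGraph (isKraus_partialTraceKraus e)).1
    (fun B hB => trace_conjTranspose_mul_eq_zero_of_mem_confGraph hK hB)
    (by rw [add_sub_cancel]; exact (posSemidef_vecMulVec_self_star v).smul (by positivity))
  rw [add_sub_cancel] at hθ
  have heig : ((k : ℂ) • vecMulVec v (star v)) *ᵥ v = ((k : ℂ) * k) • v := by
    rw [smul_mulVec, vecMulVec_mulVec, hv, op_smul_eq_smul, smul_smul]
  have hv0 : v ≠ 0 := fun h => by simp [h, eq_comm] at hv; omega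
  calc (k : ℝ) ^ 2 = ‖(k : ℂ) * k‖ := by simp [sq]
    _ ≤ _ := norm_le_norm_toEuclideanCLM_of_mulVec_eq_smul hv0 heig
    _ ≤ _ := hθ

end PartialTrace

/-- the ratios `ϑ/β` and `ϑ/γ` are unbounded over operator systems. -/
theorem theta_ratio_unbounded (C : ℝ) (hC : 0 < C) :
    (∃ n : ℕ, ∃ S : Submodule ℂ (Matrix (Fin n) (Fin n) ℂ),
      IsOperatorSystem S ∧ C * (betaOS S : ℝ) < thetaOS S) ∧
    (∃ n' : ℕ, ∃ S' : Submodule ℂ (Matrix (Fin n') (Fin n') ℂ),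
      IsOperatorSystem S' ∧ C * (gammaOS S' : ℝ) < thetaOS S') := by
  set k := ⌈C⌉₊ + 1
  have hCk : C < k := by push_cast [k]; linarith [Nat.le_ceil C]
  let e : Fin (k * k) ≃ Fin k × Fin k := finProdFinEquiv.symm
  have hA := isKraus_partialTraceKraus e
  have hθ := sq_le_thetaOS_confGraph_partialTraceKraus e (Nat.succ_pos _)
  have hbound (m : ℕ) (hm : m ≤ k) : C * m < thetaOS (confGraph (partialTraceKraus e)) :=
    calc C * m ≤ C * k := by gcongr
      _ < k ^ 2 := by rw [sq]; gcongr
      _ ≤ _ := hθ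
  exact ⟨⟨k * k, _, isOperatorSystem_confGraph hA, hbound _ (betaOS_le hA le_rfl)⟩,
    ⟨k * k, _, isOperatorSystem_confGraph hA, hbound _ (gammaOS_confGraph_le hA)⟩⟩
end
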